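/- arXiv:1903.03826 — 5 statements merged into one kernel-verified Lean document; each statement's English description precedes it below -/
import Mathlib

section
/- Let Q be a real 3×3 rotation matrix written in axis–angle (Rodrigues) form Q = I₃ + sin(θ)·v̂ + (1−cos(θ))·v̂² for some θ ∈ ℝ and unit vector v ∈ ℝ³, and let G be a real symmetric 3×3 matrix. Then ⟨G(I₃−Q), (I₃−Q)⟩ = 2·(tr(G) − vᵀGv)·(1−cos θ). -/
open Matrix Polynomial

noncomputable section

/-- The hat map sending `x ∈ ℝ³` to the skew-symmetric matrix `x̂` with `x̂ y = x × y`. -/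
def hat (x : Fin 3 → ℝ) : Matrix (Fin 3) (Fin 3) ℝ :=
  !![0, -x 2, x 1; x 2, 0, -x 0; -x 1, x 0, 0]

/-- The vee map, inverse of the hat map on skew-symmetric `3 × 3` matrices. -/
def vee (A : Matrix (Fin 3) (Fin 3) ℝ) : Fin 3 → ℝ :=
  ![A 2 1, A 0 2, A 1 0]

/-- `SO3 R` iff `R` is a rotation matrix: `RᵀR = I₃` and `det R = 1`. -/
def SO3 (R : Matrix (Fin 3) (Fin 3) ℝ) : Prop :=
  Rᵀ * R = 1 ∧ R.det = 1

/-- Frobenius inner product `⟨A,B⟩ = tr(AᵀB)`. -/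
def finner (A B : Matrix (Fin 3) (Fin 3) ℝ) : ℝ := (Aᵀ * B).trace

/-- Frobenius norm `‖A‖ = √⟨A,A⟩`. -/
def fnorm (A : Matrix (Fin 3) (Fin 3) ℝ) : ℝ := Real.sqrt (finner A A)

/-- Euclidean norm of a vector. -/
def vnorm {k : ℕ} (x : Fin k → ℝ) : ℝ := Real.sqrt (x ⬝ᵥ x)

/-- Third standard basis vector `e₃ = (0,0,1)` of `ℝ³`. -/
def e3 : Fin 3 → ℝ := ![0, 0, 1]

/-!
Write `K = v̂`, `s = sin θ`, `t = 1 - cos θ`, so `I₃ - Q = -(s K + t K²)`. Since `K` is skew and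
`K³ = -K` for a unit `v`, the cross terms cancel in `(I₃ - Q)(I₃ - Q)ᵀ`, leaving
`-(s² + t²) K² = 2 t (I₃ - v vᵀ)`. The Frobenius product is `tr (Gᵀ (I₃ - Q)(I₃ - Q)ᵀ)`, and
`tr (Gᵀ (I₃ - v vᵀ)) = tr G - vᵀ G v`.
-/

lemma hat_transpose (x : Fin 3 → ℝ) : (hat x)ᵀ = -hat x := by
  ext i j; fin_cases i <;> fin_cases j <;> simp [hat]

lemma hat_mul_hat (x : Fin 3 → ℝ) : hat x * hat x = vecMulVec x x - (x ⬝ᵥ x) • 1 := by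
  ext i j
  fin_cases i <;> fin_cases j <;>
    simp [hat, mul_apply, Fin.sum_univ_three, vecMulVec_apply, dotProduct] <;> ring

lemma hat_mul_hat_mul_hat (x : Fin 3 → ℝ) : hat x * hat x * hat x = -(x ⬝ᵥ x) • hat x := by
  ext i j
  fin_cases i <;> fin_cases j <;>
    simp [hat, mul_apply, Fin.sum_univ_three, dotProduct] <;> ring

lemma smul_add_smul_sq_mul_transpose {n : Type*} [Fintype n]
    (K : Matrix n n ℝ) (hK : Kᵀ = -K) (hK3 : K * K * K = -K) (s t : ℝ) :
    (s • K + t • (K * K)) * (s • K + t • (K * K))ᵀ = -(s ^ 2 + t ^ 2) • (K * K) := by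
  have hK4 : K * K * (K * K) = -(K * K) := by rw [← Matrix.mul_assoc, hK3, Matrix.neg_mul]
  have hK3' : K * (K * K) = -K := by rw [← Matrix.mul_assoc, hK3]
  simp only [transpose_add, transpose_smul, transpose_mul, hK, Matrix.neg_mul, Matrix.mul_neg,
    neg_neg, add_mul, mul_add, smul_mul_smul_comm, hK3, hK3', hK4, smul_neg]
  module

lemma trace_transpose_mul_vecMulVec {n : Type*} [Fintype n] (G : Matrix n n ℝ) (v : n → ℝ) :
    trace (Gᵀ * vecMulVec v v) = v ⬝ᵥ G *ᵥ v := by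
  rw [mul_vecMulVec, trace_vecMulVec, mulVec_transpose, dotProduct_mulVec]

lemma finner_mul_self_eq_trace (G A : Matrix (Fin 3) (Fin 3) ℝ) :
    finner (G * A) A = trace (Gᵀ * (A * Aᵀ)) := by
  rw [finner, transpose_mul, Matrix.mul_assoc, trace_mul_comm, Matrix.mul_assoc]

def rodrigues (θ : ℝ) (v : Fin 3 → ℝ) : Matrix (Fin 3) (Fin 3) ℝ :=
  1 + Real.sin θ • hat v + (1 - Real.cos θ) • (hat v * hat v)

lemma one_sub_rodrigues_mul_transpose (θ : ℝ) {v : Fin 3 → ℝ} (hv : v ⬝ᵥ v = 1) :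
    (1 - rodrigues θ v) * (1 - rodrigues θ v)ᵀ =
      (2 * (1 - Real.cos θ)) • (1 - vecMulVec v v) := by
  have h_neg : 1 - rodrigues θ v = -(Real.sin θ • hat v + (1 - Real.cos θ) • (hat v * hat v)) := by
    rw [rodrigues]; abel
  have h_cube : hat v * hat v * hat v = -hat v := by rw [hat_mul_hat_mul_hat, hv, neg_one_smul]
  have h_pyth : Real.sin θ ^ 2 + (1 - Real.cos θ) ^ 2 = 2 * (1 - Real.cos θ) := by
    nlinarith [Real.sin_sq_add_cos_sq θ]
  rw [h_neg, transpose_neg, neg_mul_neg,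
    smul_add_smul_sq_mul_transpose _ (hat_transpose v) h_cube, h_pyth, hat_mul_hat, hv, one_smul,
    neg_smul, ← smul_neg, neg_sub]

theorem stmt_0_general (θ : ℝ) (v : Fin 3 → ℝ) (hv : v ⬝ᵥ v = 1)
    (G : Matrix (Fin 3) (Fin 3) ℝ)
    (Q : Matrix (Fin 3) (Fin 3) ℝ)
    (hQ : Q = 1 + Real.sin θ • hat v + (1 - Real.cos θ) • (hat v * hat v)) :
    finner (G * (1 - Q)) (1 - Q) = 2 * (G.trace - v ⬝ᵥ G.mulVec v) * (1 - Real.cos θ) := by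
  change Q = rodrigues θ v at hQ
  rw [finner_mul_self_eq_trace, hQ, one_sub_rodrigues_mul_transpose θ hv, Matrix.mul_smul,
    trace_smul, Matrix.mul_sub, trace_sub, Matrix.mul_one, trace_transpose,
    trace_transpose_mul_vecMulVec, smul_eq_mul]
  ring

/-- for a rotation `Q` in Rodrigues (axis–angle) form with unit axis `v`
and a symmetric `G`, `⟨G(I₃−Q), (I₃−Q)⟩ = 2 (tr G − vᵀGv)(1 − cos θ)`. -/
theorem stmt_0 (θ : ℝ) (v : Fin 3 → ℝ) (hv : v ⬝ᵥ v = 1)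
    (G : Matrix (Fin 3) (Fin 3) ℝ) (hG : Gᵀ = G)
    (Q : Matrix (Fin 3) (Fin 3) ℝ)
    (hQ : Q = 1 + Real.sin θ • hat v + (1 - Real.cos θ) • (hat v * hat v)) :
    finner (G * (1 - Q)) (1 - Q) = 2 * (G.trace - v ⬝ᵥ G.mulVec v) * (1 - Real.cos θ) :=
  stmt_0_general θ v hv G Q hQ
end
end

section
/- Let G be a real symmetric 3×3 matrix and R, R̄ ∈ SO(3). Define Ψ(R̄) = ½⟨G(R − R̄), (R − R̄)⟩ and the attitude error vector e_R = (RᵀGR̄ − R̄ᵀGR)^∨. Then for every η ∈ ℝ³, the derivative at s = 0 of the function s ↦ ½⟨G(R − R̄·exp(s·η̂)), (R − R̄·exp(s·η̂))⟩ equals ⟨e_R, η⟩ (the Euclidean inner product of e_R and η). -/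
open Matrix Polynomial

noncomputable section

/-! For symmetric `G`, the derivative of `½⟨GM, M⟩` along `M'` is `⟨GM, M'⟩`. Along
`M(s) = R − R̄ exp(s η̂)` we have `M(0) = R − R̄` and `M'(0) = −R̄ η̂`, so the derivative is
`−tr(B η̂)` with `B = (R − R̄)ᵀ G R̄`; finally `tr(B x̂) = −(B − Bᵀ)^∨ · x`, and the terms `R̄ᵀ G R̄`
cancel in `B − Bᵀ = Rᵀ G R̄ − R̄ᵀ G R`. -/

-- Any norm on matrices would do: it only fixes the (unique) topology.
attribute [local instance] Matrix.linftyOpNormedRing Matrix.linftyOpNormedAlgebra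

def finnerBilin : Matrix (Fin 3) (Fin 3) ℝ →L[ℝ] Matrix (Fin 3) (Fin 3) ℝ →L[ℝ] ℝ :=
  (LinearMap.mk₂ ℝ finner
    (fun A A' B => by simp only [finner, transpose_add, Matrix.add_mul, trace_add])
    (fun c A B => by simp only [finner, transpose_smul, Matrix.smul_mul, trace_smul])
    (fun A B B' => by simp only [finner, Matrix.mul_add, trace_add])
    (fun c A B => by simp only [finner, Matrix.mul_smul, trace_smul])).toContinuousBilinearMap

lemma finner_comm (A B : Matrix (Fin 3) (Fin 3) ℝ) : finner A B = finner B A := by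
  rw [finner, ← trace_transpose, transpose_mul, transpose_transpose, finner]

lemma finner_mul_left_of_transpose_eq {G : Matrix (Fin 3) (Fin 3) ℝ} (hG : Gᵀ = G)
    (A B : Matrix (Fin 3) (Fin 3) ℝ) : finner (G * A) B = finner A (G * B) := by
  rw [finner, finner, transpose_mul, hG, Matrix.mul_assoc]

lemma hasDerivAt_half_finner_mul_self {G : Matrix (Fin 3) (Fin 3) ℝ} (hG : Gᵀ = G)
    {M : ℝ → Matrix (Fin 3) (Fin 3) ℝ} {M' : Matrix (Fin 3) (Fin 3) ℝ} {t : ℝ}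
    (hM : HasDerivAt M M' t) :
    HasDerivAt (fun s => 1 / 2 * finner (G * M s) (M s)) (finner (G * M t) M') t := by
  have h := finnerBilin.hasDerivAt_of_bilinear (fun _ => hM.const_mul G) (fun _ => hM)
  refine (h.const_mul (1 / 2)).congr_deriv ?_
  change 1 / 2 * (finner _ _ + finner _ _) = _
  rw [finner_mul_left_of_transpose_eq hG (M t), finner_comm (G * M') (M t)]
  ring

lemma hasDerivAt_sub_mul_exp_smul {𝔸 : Type*} [NormedRing 𝔸] [NormedAlgebra ℝ 𝔸]
    [CompleteSpace 𝔸] (R Rbar A : 𝔸) :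
    HasDerivAt (fun s : ℝ => R - Rbar * NormedSpace.exp (s • A)) (-(Rbar * A)) 0 := by
  have hexp := hasDerivAt_exp_smul_const (𝕂 := ℝ) A 0
  rw [zero_smul, NormedSpace.exp_zero, one_mul] at hexp
  exact (hexp.const_mul Rbar).const_sub R

lemma trace_mul_hat (B : Matrix (Fin 3) (Fin 3) ℝ) (x : Fin 3 → ℝ) :
    (B * hat x).trace = -(vee (B - Bᵀ) ⬝ᵥ x) := by
  simp only [hat, vee, trace_fin_three, Matrix.mul_apply, Fin.sum_univ_succ, Finset.univ_unique,
    Finset.sum_singleton, Fin.default_eq_zero, Fin.succ_zero_eq_one, Fin.succ_one_eq_two,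
    of_apply, cons_val', cons_val_zero, cons_val_one, cons_val_succ, cons_val_fin_one, cons_val,
    dotProduct, Matrix.sub_apply, transpose_apply, Fin.isValue]
  ring

lemma finner_mul_sub_neg_mul_hat {G : Matrix (Fin 3) (Fin 3) ℝ} (hG : Gᵀ = G)
    (R Rbar : Matrix (Fin 3) (Fin 3) ℝ) (η : Fin 3 → ℝ) :
    finner (G * (R - Rbar)) (-(Rbar * hat η)) = vee (Rᵀ * G * Rbar - Rbarᵀ * G * R) ⬝ᵥ η := by
  set B := (R - Rbar)ᵀ * G * Rbar
  have hB : B - Bᵀ = Rᵀ * G * Rbar - Rbarᵀ * G * R := by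
    simp only [B, transpose_mul, transpose_sub, transpose_transpose, hG, Matrix.sub_mul]
    noncomm_ring
  rw [finner, Matrix.mul_neg, trace_neg, transpose_mul, hG, ← Matrix.mul_assoc,
    trace_mul_hat, hB, neg_neg]

theorem stmt_4_general (G : Matrix (Fin 3) (Fin 3) ℝ) (hG : Gᵀ = G)
    (R Rbar : Matrix (Fin 3) (Fin 3) ℝ)
    (eR : Fin 3 → ℝ) (heR : eR = vee (Rᵀ * G * Rbar - Rbarᵀ * G * R)) (η : Fin 3 → ℝ) :
    HasDerivAt
      (fun s : ℝ =>
        (1 / 2) * finner (G * (R - Rbar * NormedSpace.exp (s • hat η)))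
          (R - Rbar * NormedSpace.exp (s • hat η)))
      (eR ⬝ᵥ η) 0 := by
  have h := hasDerivAt_half_finner_mul_self hG (hasDerivAt_sub_mul_exp_smul R Rbar (hat η))
  simp only [zero_smul, NormedSpace.exp_zero, Matrix.mul_one] at h
  rwa [finner_mul_sub_neg_mul_hat hG, ← heR] at h

/-- the derivative of `Ψ` with respect to the estimate `Rbar` along
`δRbar = Rbar η̂`, i.e. the derivative at `s = 0` of
`s ↦ ½⟨G(R − Rbar exp(s η̂)), (R − Rbar exp(s η̂))⟩`, equals `⟨e_R, η⟩`. -/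
theorem stmt_4 (G : Matrix (Fin 3) (Fin 3) ℝ) (hG : Gᵀ = G)
    (R Rbar : Matrix (Fin 3) (Fin 3) ℝ) (hR : SO3 R) (hRbar : SO3 Rbar)
    (eR : Fin 3 → ℝ) (heR : eR = vee (Rᵀ * G * Rbar - Rbarᵀ * G * R)) (η : Fin 3 → ℝ) :
    HasDerivAt
      (fun s : ℝ =>
        (1 / 2) * finner (G * (R - Rbar * NormedSpace.exp (s • hat η)))
          (R - Rbar * NormedSpace.exp (s • hat η)))
      (eR ⬝ᵥ η) 0 :=
  stmt_4_general G hG R Rbar eR heR η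
end
end

section
/- Let G be a real symmetric positive-semidefinite 3×3 matrix with eigenvalues λ₁ ≤ λ₂ ≤ λ₃, and let R, R̄ ∈ SO(3). Then, with E_R = R − R̄ and Ψ = ½⟨G·E_R, E_R⟩, one has (λ₁+λ₂)/4 · ‖E_R‖² ≤ Ψ ≤ (λ₂+λ₃)/4 · ‖E_R‖². -/
open Matrix Polynomial

noncomputable section

/-! With `Q = R Rbarᵀ ∈ SO(3)` one has `S := E_R E_Rᵀ = 2I - Q - Qᵀ`, and Cayley–Hamilton for `Q`
(whose adjugate is `Qᵀ`) gives `S² = (3 - tr Q) S`, where `3 - tr Q = ‖E_R‖² / 2`. A symmetric `S`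
with `S² = c S`, `c ≥ 0`, satisfies `S ≤ c I`, so `M := ½‖E_R‖² I - S` is positive semidefinite
with trace `½‖E_R‖²`. Now `2Ψ = tr(G S) = ½‖E_R‖² tr G - tr(G M)`, `tr G = λ₁ + λ₂ + λ₃`, and
`λ₁ tr M ≤ tr(G M) ≤ λ₃ tr M` because `G - λ₁ I` and `λ₃ I - G` are positive semidefinite. -/

namespace Matrix

variable {n : Type*} [Fintype n]

theorem PosSemidef.trace_mul_nonneg {A M : Matrix n n ℝ} (hA : A.PosSemidef)
    (hM : M.PosSemidef) : 0 ≤ (A * M).trace := by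
  obtain ⟨m, v, rfl⟩ := posSemidef_iff_eq_sum_vecMulVec.mp hM
  rw [Finset.mul_sum, trace_sum]
  refine Finset.sum_nonneg fun i _ => ?_
  rw [mul_vecMulVec, trace_vecMulVec, dotProduct_comm]
  exact hA.dotProduct_mulVec_nonneg (v i)

theorem trace_mul_le_trace_mul {A B M : Matrix n n ℝ} (hAB : (B - A).PosSemidef)
    (hM : M.PosSemidef) : (A * M).trace ≤ (B * M).trace := by
  have := hAB.trace_mul_nonneg hM
  rwa [sub_mul, trace_sub, sub_nonneg] at this

variable [DecidableEq n]

theorem IsHermitian.posSemidef_sub_smul_one {G : Matrix n n ℝ} (hG : G.IsHermitian) {a : ℝ}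
    (h : ∀ i, a ≤ hG.eigenvalues i) : (G - a • 1).PosSemidef := by
  refine posSemidef_iff_isHermitian_and_spectrum_nonneg.mpr
    ⟨hG.sub (isHermitian_one.smul (IsSelfAdjoint.all a)), ?_⟩
  rw [← Algebra.algebraMap_eq_smul_one, ← spectrum.sub_singleton_eq,
    hG.spectrum_real_eq_range_eigenvalues]
  rintro _ ⟨_, ⟨i, rfl⟩, _, rfl, rfl⟩
  simpa using h i

theorem IsHermitian.posSemidef_smul_one_sub {G : Matrix n n ℝ} (hG : G.IsHermitian) {b : ℝ}
    (h : ∀ i, hG.eigenvalues i ≤ b) : (b • 1 - G).PosSemidef := by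
  refine posSemidef_iff_isHermitian_and_spectrum_nonneg.mpr
    ⟨(isHermitian_one.smul (IsSelfAdjoint.all b)).sub hG, ?_⟩
  rw [← Algebra.algebraMap_eq_smul_one, ← spectrum.singleton_sub_eq,
    hG.spectrum_real_eq_range_eigenvalues]
  rintro _ ⟨_, rfl, _, ⟨i, rfl⟩, rfl⟩
  simpa using h i

theorem posSemidef_smul_one_sub_of_mul_self_eq_smul {S : Matrix n n ℝ} (hS : S.IsHermitian)
    {c : ℝ} (hSS : S * S = c • S) (hc : 0 ≤ c) : (c • 1 - S).PosSemidef := by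
  rcases hc.eq_or_lt with rfl | hc
  · have : S = 0 := by
      rw [← conjTranspose_mul_self_eq_zero, hS.eq, hSS, zero_smul]
    simp [this, PosSemidef.zero]
  · -- `K := c • 1 - S` satisfies `K² = c K` too, so `K = c⁻¹ Kᴴ K`.
    have hKK : (c • 1 - S)ᴴ * (c • 1 - S) = c • (c • 1 - S) := by
      rw [((isHermitian_one.smul (IsSelfAdjoint.all c)).sub hS).eq]
      simp only [sub_mul, mul_sub, smul_mul_assoc, mul_smul_comm, one_mul, mul_one, hSS]
      module
    have := (posSemidef_conjTranspose_mul_self (c • 1 - S)).smul (inv_nonneg.mpr hc.le)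
    rwa [hKK, smul_smul, inv_mul_cancel₀ hc.ne', one_smul] at this

theorem IsHermitian.eigenvalues_mem_of_charpoly_eq {G : Matrix n n ℝ} (hG : G.IsHermitian)
    {s : Multiset ℝ} (h : G.charpoly = (s.map fun a => X - C a).prod) (i : n) :
    hG.eigenvalues i ∈ s := by
  rw [← roots_multiset_prod_X_sub_C s, ← h, hG.roots_charpoly_eq_eigenvalues]
  simp

theorem trace_eq_sum_of_charpoly_eq {G : Matrix n n ℝ} {s : Multiset ℝ}
    (h : G.charpoly = (s.map fun a => X - C a).prod) : G.trace = s.sum := by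
  have hsplit : G.charpoly.Splits := h ▸ Splits.multisetProd (by simp [Splits.X_sub_C])
  rw [trace_eq_sum_roots_charpoly_of_splits hsplit, h, roots_multiset_prod_X_sub_C]

-- Cayley–Hamilton for `3 × 3` matrices, solved for the adjugate.
theorem adjugate_fin_three_eq (A : Matrix (Fin 3) (Fin 3) ℝ) :
    A.adjugate = A * A - A.trace • A + A.adjugate.trace • 1 := by
  rw [adjugate_fin_three]
  ext i j
  fin_cases i <;> fin_cases j <;>
    simp [mul_apply, Fin.sum_univ_three, trace_fin_three] <;> ring

end Matrix

theorem fnorm_sq (A : Matrix (Fin 3) (Fin 3) ℝ) : fnorm A ^ 2 = (A * Aᵀ).trace := by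
  have h : 0 ≤ finner A A := (posSemidef_conjTranspose_mul_self A).trace_nonneg
  rw [fnorm, Real.sq_sqrt h, finner, trace_mul_comm]

theorem finner_mul_left_self {G : Matrix (Fin 3) (Fin 3) ℝ} (hG : G.IsHermitian)
    (A : Matrix (Fin 3) (Fin 3) ℝ) : finner (G * A) A = (G * (A * Aᵀ)).trace := by
  rw [finner, transpose_mul, ← conjTranspose_eq_transpose_of_trivial G, hG.eq,
    Matrix.mul_assoc, trace_mul_comm, Matrix.mul_assoc]

namespace SO3

variable {Q R S : Matrix (Fin 3) (Fin 3) ℝ}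

theorem mul_transpose (hR : SO3 R) : R * Rᵀ = 1 := mul_eq_one_comm.mp hR.1

theorem mul_transpose_mem (hR : SO3 R) (hS : SO3 S) : SO3 (R * Sᵀ) := by
  refine ⟨?_, by rw [det_mul, det_transpose, hR.2, hS.2, one_mul]⟩
  rw [transpose_mul, transpose_transpose, Matrix.mul_assoc, ← Matrix.mul_assoc Rᵀ,
    hR.1, Matrix.one_mul, hS.mul_transpose]

theorem adjugate_eq_transpose (hQ : SO3 Q) : Q.adjugate = Qᵀ :=
  calc Q.adjugate = Qᵀ * Q * Q.adjugate := by rw [hQ.1, Matrix.one_mul]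
    _ = Qᵀ := by rw [Matrix.mul_assoc, mul_adjugate, hQ.2, one_smul, Matrix.mul_one]

theorem mul_self (hQ : SO3 Q) : Q * Q = Q.trace • Q - Q.trace • 1 + Qᵀ := by
  have h := Q.adjugate_fin_three_eq
  rw [hQ.adjugate_eq_transpose, trace_transpose] at h
  rw [h]
  abel

theorem two_sub_sub_transpose_mul_self (hQ : SO3 Q) :
    ((2 : ℝ) • 1 - Q - Qᵀ) * ((2 : ℝ) • 1 - Q - Qᵀ) = (3 - Q.trace) • ((2 : ℝ) • 1 - Q - Qᵀ) := by
  have hQt : Qᵀ * Qᵀ = Q.trace • Qᵀ - Q.trace • 1 + Q := by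
    simpa [transpose_mul] using congrArg transpose hQ.mul_self
  simp only [sub_mul, mul_sub, smul_mul_assoc, mul_smul_comm, Matrix.one_mul, Matrix.mul_one,
    hQ.1, hQ.mul_transpose, hQ.mul_self, hQt]
  module

theorem sub_mul_transpose_sub (hR : SO3 R) (hS : SO3 S) :
    (R - S) * (R - S)ᵀ = (2 : ℝ) • 1 - R * Sᵀ - (R * Sᵀ)ᵀ := by
  rw [transpose_sub, transpose_mul, transpose_transpose, sub_mul, mul_sub, mul_sub,
    hR.mul_transpose, hS.mul_transpose]
  module

theorem posSemidef_fnorm_sq_div_two_smul_one_sub (hR : SO3 R) (hS : SO3 S) :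
    ((fnorm (R - S) ^ 2 / 2) • 1 - (R - S) * (R - S)ᵀ).PosSemidef := by
  have hE := hR.sub_mul_transpose_sub hS
  have hc : fnorm (R - S) ^ 2 / 2 = 3 - (R * Sᵀ).trace := by
    rw [fnorm_sq, hE]
    simp only [trace_sub, trace_smul, trace_one, trace_transpose, Fintype.card_fin]
    push_cast
    ring
  have hEh : ((R - S) * (R - S)ᵀ).IsHermitian := isHermitian_mul_conjTranspose_self (R - S)
  refine posSemidef_smul_one_sub_of_mul_self_eq_smul hEh ?_ (by positivity)
  rw [hc, hE]
  exact (hR.mul_transpose_mem hS).two_sub_sub_transpose_mul_self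

end SO3

/-- for a symmetric PSD `G` with eigenvalues `l1 ≤ l2 ≤ l3` and
`R, Rbar ∈ SO(3)`, with `E_R = R − Rbar` and `Ψ = ½⟨G E_R, E_R⟩`,
`(l1+l2)/4 ‖E_R‖² ≤ Ψ ≤ (l2+l3)/4 ‖E_R‖²`. -/
theorem stmt_5 (G : Matrix (Fin 3) (Fin 3) ℝ) (hG : G.PosSemidef)
    (l1 l2 l3 : ℝ) (h12 : l1 ≤ l2) (h23 : l2 ≤ l3)
    (hchar : G.charpoly = (X - C l1) * (X - C l2) * (X - C l3))
    (R Rbar : Matrix (Fin 3) (Fin 3) ℝ) (hR : SO3 R) (hRbar : SO3 Rbar) :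
    (l1 + l2) / 4 * fnorm (R - Rbar) ^ 2 ≤ (1 / 2) * finner (G * (R - Rbar)) (R - Rbar) ∧
    (1 / 2) * finner (G * (R - Rbar)) (R - Rbar) ≤ (l2 + l3) / 4 * fnorm (R - Rbar) ^ 2 := by
  have hGh := hG.isHermitian
  have hchar' : G.charpoly = (({l1, l2, l3} : Multiset ℝ).map fun a => X - C a).prod := by
    simp [hchar, mul_assoc]
  have heig (i : Fin 3) : l1 ≤ hGh.eigenvalues i ∧ hGh.eigenvalues i ≤ l3 := by
    have := hGh.eigenvalues_mem_of_charpoly_eq hchar' i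
    simp only [Multiset.insert_eq_cons, Multiset.mem_cons, Multiset.mem_singleton] at this
    rcases this with h | h | h <;> constructor <;> linarith
  have htrG : G.trace = l1 + l2 + l3 := by
    rw [trace_eq_sum_of_charpoly_eq hchar']
    simp [add_assoc]
  have hM := SO3.posSemidef_fnorm_sq_div_two_smul_one_sub hR hRbar
  have hlow := trace_mul_le_trace_mul (hGh.posSemidef_sub_smul_one fun i => (heig i).1) hM
  have hupp := trace_mul_le_trace_mul (hGh.posSemidef_smul_one_sub fun i => (heig i).2) hM
  rw [finner_mul_left_self hGh]
  simp only [mul_sub, smul_mul_assoc, Matrix.one_mul, mul_smul_comm, Matrix.mul_one, trace_sub,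
    trace_smul, trace_one, Fintype.card_fin, htrG, ← fnorm_sq, smul_eq_mul] at hlow hupp
  constructor <;> linarith
end
end

section
/- Let G be a real symmetric 3×3 matrix with entries Gᵢⱼ, θ ∈ ℝ, and Q = I₃ + sin(θ)·ê₃ + (1−cos(θ))·ê₃² (the rotation by angle θ about e₃ = (0,0,1)). Then ½·‖G·Qᵀ − Q·G‖² = 2(1−cos θ)·[ G₁₃² + G₂₃² + (G₁₁+G₂₂)²·(1 − (1−cos θ)/2) ]. Equivalently, writing E = I₃ − Q so that ‖E‖² = 4(1−cos θ), one has 2·(½‖GQᵀ−QG‖²)/‖E‖² = G₁₃² + G₂₃² + (G₁₁+G₂₂)²·(1 − ‖E‖²/8) whenever θ is not a multiple of 2π. -/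
/-! For the rotation about `e₃`, Rodrigues' formula gives the explicit matrix
`Q = [[cos θ, -sin θ, 0], [sin θ, cos θ, 0], [0, 0, 1]]`. For symmetric `G` the entries of
`G Qᵀ - Q G` are then polynomial in `cos θ` and `sin θ`, and `sin² θ + cos² θ = 1` reduces
the sum of their squares to the stated form. -/

open Matrix Polynomial

noncomputable section

def rotZ (θ : ℝ) : Matrix (Fin 3) (Fin 3) ℝ :=
  !![Real.cos θ, -Real.sin θ, 0; Real.sin θ, Real.cos θ, 0; 0, 0, 1]

lemma fnorm_sq_eq_sum (A : Matrix (Fin 3) (Fin 3) ℝ) :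
    fnorm A ^ 2 = ∑ i, ∑ j, A i j ^ 2 := by
  have h : finner A A = ∑ i, ∑ j, A i j ^ 2 := by
    rw [finner, Matrix.trace, Finset.sum_comm]
    simp [mul_apply, sq]
  rw [fnorm, h, Real.sq_sqrt (by positivity)]

lemma rodrigues_e3 (θ : ℝ) :
    1 + Real.sin θ • hat e3 + (1 - Real.cos θ) • (hat e3 * hat e3) = rotZ θ := by
  ext i j
  fin_cases i <;> fin_cases j <;> simp [rotZ, hat, e3]

lemma fnorm_sq_one_sub_rotZ (θ : ℝ) : fnorm (1 - rotZ θ) ^ 2 = 4 * (1 - Real.cos θ) := by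
  simp only [fnorm_sq_eq_sum, Fin.sum_univ_three, rotZ, Matrix.sub_apply, one_apply, of_apply,
    cons_val', cons_val_fin_one, cons_val_zero, cons_val_one, cons_val, Fin.isValue, ↓reduceIte,
    Fin.reduceEq]
  linear_combination 2 * Real.sin_sq_add_cos_sq θ

lemma fnorm_sq_mul_rotZ_transpose_sub (G : Matrix (Fin 3) (Fin 3) ℝ) (hG : Gᵀ = G) (θ : ℝ) :
    fnorm (G * (rotZ θ)ᵀ - rotZ θ * G) ^ 2 =
      4 * (1 - Real.cos θ) *
        (G 0 2 ^ 2 + G 1 2 ^ 2 + (G 0 0 + G 1 1) ^ 2 * (1 - (1 - Real.cos θ) / 2)) := by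
  have hG' (i j : Fin 3) : G j i = G i j := congrFun (congrFun hG i) j
  simp only [fnorm_sq_eq_sum, Fin.sum_univ_three, rotZ, Matrix.sub_apply, mul_apply,
    transpose_apply, of_apply, cons_val', cons_val_fin_one, cons_val_zero, cons_val_one, cons_val,
    Fin.isValue, hG' 0 1, hG' 0 2, hG' 1 2]
  linear_combination 2 * ((G 0 0 + G 1 1) ^ 2 + G 0 2 ^ 2 + G 1 2 ^ 2) * Real.sin_sq_add_cos_sq θ

/-- for symmetric `G` and `Q` the rotation by angle `θ` about `e₃`,
`½‖G Qᵀ − Q G‖² = 2(1 − cos θ)[G₁₃² + G₂₃² + (G₁₁+G₂₂)²(1 − (1−cos θ)/2)]`; equivalently,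
with `E = I₃ − Q` (so `‖E‖² = 4(1 − cos θ)`), whenever `θ` is not a multiple of `2π`,
`2 (½‖G Qᵀ − Q G‖²)/‖E‖² = G₁₃² + G₂₃² + (G₁₁+G₂₂)²(1 − ‖E‖²/8)`. -/
theorem stmt_12 (G : Matrix (Fin 3) (Fin 3) ℝ) (hG : Gᵀ = G) (θ : ℝ)
    (Q : Matrix (Fin 3) (Fin 3) ℝ)
    (hQ : Q = 1 + Real.sin θ • hat e3 + (1 - Real.cos θ) • (hat e3 * hat e3)) :
    ((1 / 2) * fnorm (G * Qᵀ - Q * G) ^ 2 =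
      2 * (1 - Real.cos θ) *
        (G 0 2 ^ 2 + G 1 2 ^ 2 + (G 0 0 + G 1 1) ^ 2 * (1 - (1 - Real.cos θ) / 2))) ∧
    ((¬ ∃ k : ℤ, θ = k * (2 * Real.pi)) →
      2 * ((1 / 2) * fnorm (G * Qᵀ - Q * G) ^ 2) / fnorm (1 - Q) ^ 2 =
        G 0 2 ^ 2 + G 1 2 ^ 2 + (G 0 0 + G 1 1) ^ 2 * (1 - fnorm (1 - Q) ^ 2 / 8)) := by
  rw [rodrigues_e3] at hQ
  subst hQ
  have hcomm := fnorm_sq_mul_rotZ_transpose_sub G hG θ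
  refine ⟨by rw [hcomm]; ring, fun hθ => ?_⟩
  have hcos : 1 - Real.cos θ ≠ 0 := by
    rw [sub_ne_zero, ne_comm, Ne, Real.cos_eq_one_iff]
    rintro ⟨n, hn⟩
    exact hθ ⟨n, hn.symm⟩
  rw [hcomm, fnorm_sq_one_sub_rotZ]
  field_simp
  ring
end
end

section
/- Let s₁, …, sₙ ∈ ℝ³, let w₁, …, wₙ be real weights, set G = Σᵢ wᵢ·sᵢ·sᵢᵀ, and let R, R̄ ∈ SO(3). Then the attitude error vector satisfies (RᵀGR̄ − R̄ᵀGR)^∨ = Σᵢ wᵢ·(R̄ᵀsᵢ) × (Rᵀsᵢ). -/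
open Matrix Polynomial

noncomputable section

def veeLinearMap : Matrix (Fin 3) (Fin 3) ℝ →ₗ[ℝ] Fin 3 → ℝ where
  toFun := vee
  map_add' A B := by ext i; fin_cases i <;> rfl
  map_smul' c A := by ext i; fin_cases i <;> rfl

theorem vee_vecMulVec_sub_vecMulVec (a b : Fin 3 → ℝ) :
    vee (vecMulVec a b - vecMulVec b a) = b ⨯₃ a := by
  ext i
  fin_cases i <;> simp [vee, vecMulVec_apply, cross_apply] <;> ring

theorem transpose_mul_vecMulVec_mul {l m n α : Type*} [CommSemiring α] [Fintype m]
    (A : Matrix m l α) (B : Matrix m n α) (x y : m → α) :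
    Aᵀ * vecMulVec x y * B = vecMulVec (Aᵀ *ᵥ x) (Bᵀ *ᵥ y) := by
  rw [mul_vecMulVec, vecMulVec_mul, mulVec_transpose B]

theorem stmt_15_general {n : ℕ} (s : Fin n → Fin 3 → ℝ) (w : Fin n → ℝ)
    (G : Matrix (Fin 3) (Fin 3) ℝ) (hG : G = ∑ i, w i • vecMulVec (s i) (s i))
    (R Rbar : Matrix (Fin 3) (Fin 3) ℝ) :
    vee (Rᵀ * G * Rbar - Rbarᵀ * G * R) =
      ∑ i, w i • crossProduct (Rbarᵀ.mulVec (s i)) (Rᵀ.mulVec (s i)) := by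
  have hsum : Rᵀ * G * Rbar - Rbarᵀ * G * R =
      ∑ i, w i • (vecMulVec (Rᵀ *ᵥ s i) (Rbarᵀ *ᵥ s i) - vecMulVec (Rbarᵀ *ᵥ s i) (Rᵀ *ᵥ s i)) := by
    simp only [hG, Matrix.mul_sum, Matrix.sum_mul, Matrix.mul_smul, Matrix.smul_mul,
      transpose_mul_vecMulVec_mul, smul_sub, Finset.sum_sub_distrib]
  show veeLinearMap _ = _
  simp only [hsum, map_sum, map_smul]
  exact Finset.sum_congr rfl fun i _ => congrArg _ (vee_vecMulVec_sub_vecMulVec _ _)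

/-- for `G = Σᵢ wᵢ sᵢ sᵢᵀ` and `R, Rbar ∈ SO(3)`,
`(RᵀG Rbar − RbarᵀG R)^∨ = Σᵢ wᵢ (Rbarᵀsᵢ) × (Rᵀsᵢ)`. -/
theorem stmt_15 {n : ℕ} (s : Fin n → Fin 3 → ℝ) (w : Fin n → ℝ)
    (G : Matrix (Fin 3) (Fin 3) ℝ) (hG : G = ∑ i, w i • vecMulVec (s i) (s i))
    (R Rbar : Matrix (Fin 3) (Fin 3) ℝ) (hR : SO3 R) (hRbar : SO3 Rbar) :
    vee (Rᵀ * G * Rbar - Rbarᵀ * G * R) =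
      ∑ i, w i • crossProduct (Rbarᵀ.mulVec (s i)) (Rᵀ.mulVec (s i)) :=
  stmt_15_general s w G hG R Rbar
end
end
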